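/- arXiv:2601.12988 — 5 statements merged into one kernel-verified Lean document; each statement's English description precedes it below -/
import Mathlib

section
/- Theorem 3.2, Part 1 (Relative Advantage, failed solutions): Under the reward structure above, for every index i with r^sol_i = 0, the standardized advantages satisfy Â_i(r^sol) ≤ Â_i(r^draft). -/
open Finset

/-- Population mean of a vector `r : Fin n → ℝ`. -/
noncomputable def mean {n : ℕ} (r : Fin n → ℝ) : ℝ := (∑ i, r i) / n

/-- Population variance of a vector `r : Fin n → ℝ`. -/
noncomputable def pvar {n : ℕ} (r : Fin n → ℝ) : ℝ := (∑ i, (r i - mean r) ^ 2) / n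

/-- Population standard deviation. -/
noncomputable def pstd {n : ℕ} (r : Fin n → ℝ) : ℝ := Real.sqrt (pvar r)

/-- Coefficient of variation. -/
noncomputable def cv {n : ℕ} (r : Fin n → ℝ) : ℝ := pstd r / mean r

/-- Standardized (group-relative) advantage of the `i`-th entry. -/
noncomputable def adv {n : ℕ} (r : Fin n → ℝ) (i : Fin n) : ℝ := (r i - mean r) / pstd r

/-!
At a failed index the reward is `0`, so its advantage is `-mean r / pstd r = -(cv r)⁻¹`, and the
claim becomes `cv rsol ≤ cv rdraft`. Since `rsol` is `0/1`-valued, `cv rsol ^ 2 = 1 / mean rsol - 1`,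
while `cv rdraft ^ 2 = mean (rdraft ^ 2) / mean rdraft ^ 2 - 1`. As `rdraft` vanishes off the
support of `rsol`, `rdraft = rsol * rdraft`, and Cauchy–Schwarz gives
`mean rdraft ^ 2 ≤ mean (rsol ^ 2) * mean (rdraft ^ 2) = mean rsol * mean (rdraft ^ 2)`.
-/

section

variable {n : ℕ}

lemma pvar_eq_mean_sq_sub_sq_mean (r : Fin n → ℝ) : pvar r = mean (r ^ 2) - mean r ^ 2 := by
  rcases n.eq_zero_or_pos with rfl | hn
  · simp [pvar, mean]
  have hn' : (n : ℝ) ≠ 0 := by positivity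
  simp only [pvar, mean, Pi.pow_apply, sub_sq, sum_add_distrib, sum_sub_distrib, ← sum_mul,
    ← mul_sum, sum_const, card_univ, Fintype.card_fin, nsmul_eq_mul]
  field_simp
  ring

lemma mean_nonneg {r : Fin n → ℝ} (hr : ∀ k, 0 ≤ r k) : 0 ≤ mean r :=
  div_nonneg (sum_nonneg fun k _ => hr k) (Nat.cast_nonneg n)

lemma mean_pos_of_nonneg {r : Fin n → ℝ} (hr : ∀ k, 0 ≤ r k) {j : Fin n} (hj : 0 < r j) :
    0 < mean r :=
  div_pos (sum_pos' (fun k _ => hr k) ⟨j, mem_univ j, hj⟩) (by exact_mod_cast j.pos)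

lemma pvar_nonneg (r : Fin n → ℝ) : 0 ≤ pvar r :=
  mean_nonneg (r := fun k => (r k - mean r) ^ 2) fun _ => sq_nonneg _

lemma pstd_pos_of_ne_mean {r : Fin n → ℝ} {i : Fin n} (hi : r i ≠ mean r) : 0 < pstd r :=
  Real.sqrt_pos.2 <| mean_pos_of_nonneg (r := fun k => (r k - mean r) ^ 2) (fun _ => sq_nonneg _)
    (sq_pos_iff.2 (sub_ne_zero.2 hi))

lemma sq_mean_mul_le_mean_sq_mul_mean_sq (r s : Fin n → ℝ) :
    mean (r * s) ^ 2 ≤ mean (r ^ 2) * mean (s ^ 2) := by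
  simp only [mean, Pi.mul_apply, Pi.pow_apply]
  rw [div_pow, div_mul_div_comm, ← sq]
  exact div_le_div_of_nonneg_right (sum_mul_sq_le_sq_mul_sq _ _ _) (by positivity)

lemma cv_nonneg {r : Fin n → ℝ} (hr : 0 ≤ mean r) : 0 ≤ cv r :=
  div_nonneg (Real.sqrt_nonneg _) hr

lemma sq_cv {r : Fin n → ℝ} (hr : mean r ≠ 0) : cv r ^ 2 = mean (r ^ 2) / mean r ^ 2 - 1 := by
  rw [cv, div_pow, pstd, Real.sq_sqrt (pvar_nonneg r), pvar_eq_mean_sq_sub_sq_mean]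
  field_simp

lemma adv_eq_neg_inv_cv {r : Fin n → ℝ} {i : Fin n} (hi : r i = 0) : adv r i = -(cv r)⁻¹ := by
  rw [adv, cv, hi, zero_sub, neg_div, inv_div]

lemma cv_pos {r : Fin n → ℝ} (hr : 0 < mean r) {i : Fin n} (hi : r i = 0) : 0 < cv r :=
  div_pos (pstd_pos_of_ne_mean (hi ▸ hr.ne)) hr

/-- An idempotent `r` is `0/1`-valued, and `r * s = s` says that `s` vanishes off its support. -/
lemma cv_le_cv_of_mul_eq {r s : Fin n → ℝ} (hr : r ^ 2 = r) (hs : r * s = s) (hμ : 0 < mean s) :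
    cv r ≤ cv s := by
  have hcs : mean s ^ 2 ≤ mean r * mean (s ^ 2) := by
    simpa only [hr, hs] using sq_mean_mul_le_mean_sq_mul_mean_sq r s
  have hμr : 0 < mean r := pos_of_mul_pos_left ((pow_pos hμ 2).trans_le hcs)
    (mean_nonneg fun k => sq_nonneg (s k))
  rw [← pow_le_pow_iff_left₀ (cv_nonneg hμr.le) (cv_nonneg hμ.le) two_ne_zero, sq_cv hμr.ne',
    sq_cv hμ.ne', hr, sub_le_sub_iff_right, div_le_div_iff₀ (by positivity) (by positivity)]
  linarith [mul_le_mul_of_nonneg_left hcs hμr.le]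

end

theorem stmt_0_general {n : ℕ} (rsol ρ rdraft : Fin n → ℝ)
    (hsol : ∀ i, rsol i = 0 ∨ rsol i = 1)
    (hρ : ∀ i, 0 ≤ ρ i ∧ ρ i ≤ 1)
    (hdraft : ∀ i, rdraft i = ρ i * rsol i)
    (hj : ∃ j, rsol j = 1 ∧ 0 < ρ j)
    (i : Fin n) (hi : rsol i = 0) :
    adv rsol i ≤ adv rdraft i := by
  obtain ⟨j, hsolj, hρj⟩ := hj
  have hsol_nonneg (k : Fin n) : 0 ≤ rsol k := by rcases hsol k with h | h <;> simp [h]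
  have hidem : rsol ^ 2 = rsol := funext fun k => by rcases hsol k with h | h <;> simp [h]
  have hdraft_eq : rdraft = ρ * rsol := funext hdraft
  have hsupp : rsol * rdraft = rdraft := by
    rw [hdraft_eq, mul_left_comm, ← sq, hidem]
  have hμsol : 0 < mean rsol := mean_pos_of_nonneg hsol_nonneg (j := j) (by simp [hsolj])
  have hμdraft : 0 < mean rdraft :=
    mean_pos_of_nonneg (fun k => hdraft k ▸ mul_nonneg (hρ k).1 (hsol_nonneg k)) (j := j)
      (by simp [hdraft, hsolj, hρj])
  rw [adv_eq_neg_inv_cv hi, adv_eq_neg_inv_cv (by simp [hdraft, hi])]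
  exact neg_le_neg (inv_anti₀ (cv_pos hμsol hi) (cv_le_cv_of_mul_eq hidem hsupp hμdraft))

/-- Theorem 3.2, Part 1 (Relative Advantage, failed solutions):
for every index `i` with `rsol i = 0`, `adv rsol i ≤ adv rdraft i`. -/
theorem stmt_0 {n : ℕ} (hn : 1 ≤ n) (rsol ρ rdraft : Fin n → ℝ)
    (hsol : ∀ i, rsol i = 0 ∨ rsol i = 1)
    (hρ : ∀ i, 0 ≤ ρ i ∧ ρ i ≤ 1)
    (hdraft : ∀ i, rdraft i = ρ i * rsol i)
    (hn1 : 1 ≤ (Finset.univ.filter (fun i => rsol i = 1)).card)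
    (hn0 : 1 ≤ (Finset.univ.filter (fun i => rsol i = 0)).card)
    (hj : ∃ j, rsol j = 1 ∧ 0 < ρ j)
    (i : Fin n) (hi : rsol i = 0) :
    adv rsol i ≤ adv rdraft i :=
  stmt_0_general rsol ρ rdraft hsol hρ hdraft hj i hi
end

section
/- Theorem 3.2, Part 2 (Relative Advantage, successful solutions after below-average drafts): Under the reward structure above, for every index i with r^sol_i = 1 and r^draft_i ≤ mean(r^draft), the standardized advantages satisfy Â_i(r^draft) ≤ Â_i(r^sol). -/
/-!
The standardized advantage has the sign of `r i - mean r`, since the standard deviation is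
nonnegative. A below-average draft therefore has nonpositive advantage, while a successful
solution scores `1`, the largest possible `{0,1}`-reward, hence at least the mean, so its
advantage is nonnegative.
-/

open Finset

section

variable {n : ℕ} {r : Fin n → ℝ}

lemma mean_le_of_forall_le (hn : 0 < n) {c : ℝ} (h : ∀ j, r j ≤ c) : mean r ≤ c := by
  rw [mean, div_le_iff₀ (by exact_mod_cast hn)]
  calc ∑ j, r j ≤ ∑ _j : Fin n, c := sum_le_sum fun j _ => h j
    _ = c * n := by simp [mul_comm]

lemma adv_nonpos_of_le_mean {i : Fin n} (h : r i ≤ mean r) : adv r i ≤ 0 :=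
  div_nonpos_of_nonpos_of_nonneg (sub_nonpos.mpr h) (Real.sqrt_nonneg _)

lemma adv_nonneg_of_mean_le {i : Fin n} (h : mean r ≤ r i) : 0 ≤ adv r i :=
  div_nonneg (sub_nonneg.mpr h) (Real.sqrt_nonneg _)

end

theorem stmt_1_general {n : ℕ} (rsol rdraft : Fin n → ℝ)
    (hsol : ∀ i, rsol i = 0 ∨ rsol i = 1)
    (i : Fin n) (hi : rsol i = 1) (hbelow : rdraft i ≤ mean rdraft) :
    adv rdraft i ≤ adv rsol i := by
  have hsol_le_one : ∀ j, rsol j ≤ 1 := fun j => by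
    rcases hsol j with h | h <;> simp [h]
  have hmean_le : mean rsol ≤ rsol i := hi ▸ mean_le_of_forall_le i.pos hsol_le_one
  calc adv rdraft i ≤ 0 := adv_nonpos_of_le_mean hbelow
    _ ≤ adv rsol i := adv_nonneg_of_mean_le hmean_le

/-- Theorem 3.2, Part 2 (successful solutions after below-average drafts):
for every index `i` with `rsol i = 1` and `rdraft i ≤ mean rdraft`,
`adv rdraft i ≤ adv rsol i`. -/
theorem stmt_1 {n : ℕ} (hn : 1 ≤ n) (rsol ρ rdraft : Fin n → ℝ)
    (hsol : ∀ i, rsol i = 0 ∨ rsol i = 1)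
    (hρ : ∀ i, 0 ≤ ρ i ∧ ρ i ≤ 1)
    (hdraft : ∀ i, rdraft i = ρ i * rsol i)
    (hn1 : 1 ≤ (Finset.univ.filter (fun i => rsol i = 1)).card)
    (hn0 : 1 ≤ (Finset.univ.filter (fun i => rsol i = 0)).card)
    (hj : ∃ j, rsol j = 1 ∧ 0 < ρ j)
    (i : Fin n) (hi : rsol i = 1) (hbelow : rdraft i ≤ mean rdraft) :
    adv rdraft i ≤ adv rsol i :=
  stmt_1_general rsol rdraft hsol i hi hbelow
end

section
/- Lemma B.2 (Coefficient of Variation Inequality): Under the reward structure above, the coefficients of variation satisfy CV(r^draft) ≥ CV(r^sol). -/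
/-!
Since `CV(r)² + 1 = n ∑ rᵢ² / (∑ rᵢ)²` whenever `mean r > 0`, and `rsol² = rsol`, the claim
reduces to `(∑ rdraft)² ≤ n₁ ∑ rdraft²` with `n₁ = ∑ rsol`. This is Cauchy–Schwarz for
`∑ rdraft = ∑ rsol · rdraft`, as `rdraft` vanishes off the support of `rsol`.
-/

open Finset

lemma sum_eq_mul_mean {n : ℕ} (hn : n ≠ 0) (r : Fin n → ℝ) : ∑ i, r i = n * mean r := by
  rw [mean]; field_simp

lemma sum_pos_of_mean_pos {n : ℕ} {r : Fin n → ℝ} (hr : 0 < mean r) : 0 < ∑ i, r i := by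
  by_contra! hle
  exact hr.not_ge (div_nonpos_of_nonpos_of_nonneg hle n.cast_nonneg)

lemma mean_pos_of_nonneg_of_pos {n : ℕ} {r : Fin n → ℝ} (hr : ∀ i, 0 ≤ r i) (j : Fin n)
    (hj : 0 < r j) : 0 < mean r := by
  have hn : (0 : ℝ) < n := by exact_mod_cast j.pos
  exact div_pos (sum_pos' (fun i _ => hr i) ⟨j, mem_univ j, hj⟩) hn

lemma pvar_eq_sum_sq_div_sub_mean_sq {n : ℕ} (r : Fin n → ℝ) :
    pvar r = (∑ i, r i ^ 2) / n - mean r ^ 2 := by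
  rcases eq_or_ne n 0 with rfl | hn
  · simp [pvar, mean]
  have hexpand : ∑ i, (r i - mean r) ^ 2 = ∑ i, r i ^ 2 - n * mean r ^ 2 := by
    simp only [sub_sq, sum_add_distrib, sum_sub_distrib, ← sum_mul, ← mul_sum,
      sum_eq_mul_mean hn r, sum_const, card_univ, Fintype.card_fin, nsmul_eq_mul]
    ring
  rw [pvar, hexpand]
  field_simp

lemma cv_eq_sqrt {n : ℕ} {r : Fin n → ℝ} (hr : 0 < mean r) :
    cv r = √(n * (∑ i, r i ^ 2) / (∑ i, r i) ^ 2 - 1) := by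
  have hn : n ≠ 0 := by
    rintro rfl
    simp [mean] at hr
  rw [cv, pstd, ← Real.sqrt_sq hr.le, ← Real.sqrt_div' _ (sq_nonneg _),
    pvar_eq_sum_sq_div_sub_mean_sq, sum_eq_mul_mean hn r]
  congr 1
  field_simp

lemma cv_le_cv {n : ℕ} {r r' : Fin n → ℝ} (hr : 0 < mean r) (hr' : 0 < mean r')
    (h : (∑ i, r i ^ 2) * (∑ i, r' i) ^ 2 ≤ (∑ i, r' i ^ 2) * (∑ i, r i) ^ 2) :
    cv r ≤ cv r' := by
  have hsq_pos : 0 < (∑ i, r i) ^ 2 := pow_pos (sum_pos_of_mean_pos hr) 2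
  have hsq_pos' : 0 < (∑ i, r' i) ^ 2 := pow_pos (sum_pos_of_mean_pos hr') 2
  rw [cv_eq_sqrt hr, cv_eq_sqrt hr']
  refine Real.sqrt_le_sqrt (sub_le_sub_right ?_ 1)
  rw [mul_div_assoc, mul_div_assoc]
  exact mul_le_mul_of_nonneg_left ((div_le_div_iff₀ hsq_pos hsq_pos').2 h) n.cast_nonneg

lemma sq_sum_le_sum_mul_sum_sq_of_supported {ι : Type*} (s : Finset ι) {e d : ι → ℝ}
    (he : ∀ i, e i ^ 2 = e i) (hd : ∀ i, e i * d i = d i) :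
    (∑ i ∈ s, d i) ^ 2 ≤ (∑ i ∈ s, e i) * ∑ i ∈ s, d i ^ 2 := by
  simpa only [hd, he] using sum_mul_sq_le_sq_mul_sq s e d

theorem stmt_3_general {n : ℕ} (rsol ρ rdraft : Fin n → ℝ)
    (hsol : ∀ i, rsol i = 0 ∨ rsol i = 1)
    (hρ : ∀ i, 0 ≤ ρ i ∧ ρ i ≤ 1)
    (hdraft : ∀ i, rdraft i = ρ i * rsol i)
    (hj : ∃ j, rsol j = 1 ∧ 0 < ρ j) :
    cv rsol ≤ cv rdraft := by
  obtain ⟨j, hj1, hjρ⟩ := hj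
  have hsol_sq (i : Fin n) : rsol i ^ 2 = rsol i := by
    rcases hsol i with h | h <;> simp [h]
  have hsol_nonneg (i : Fin n) : 0 ≤ rsol i := by
    rcases hsol i with h | h <;> simp [h]
  have hsupp (i : Fin n) : rsol i * rdraft i = rdraft i := by
    rcases hsol i with h | h <;> simp [hdraft i, h]
  have hdraft_nonneg (i : Fin n) : 0 ≤ rdraft i := by
    rw [hdraft i]; exact mul_nonneg (hρ i).1 (hsol_nonneg i)
  have hmean_sol : 0 < mean rsol := mean_pos_of_nonneg_of_pos hsol_nonneg j (by simp [hj1])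
  have hmean_draft : 0 < mean rdraft :=
    mean_pos_of_nonneg_of_pos hdraft_nonneg j (by simpa [hdraft j, hj1] using hjρ)
  have hCS := sq_sum_le_sum_mul_sum_sq_of_supported univ hsol_sq hsupp
  have hsum_sol : 0 ≤ ∑ i, rsol i := sum_nonneg fun i _ => hsol_nonneg i
  apply cv_le_cv hmean_sol hmean_draft
  rw [sum_congr rfl fun i _ => hsol_sq i]
  exact (mul_le_mul_of_nonneg_left hCS hsum_sol).trans_eq (by ring)

/-- Lemma B.2 (Coefficient of Variation Inequality): `cv rdraft ≥ cv rsol`. -/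
theorem stmt_3 {n : ℕ} (hn : 1 ≤ n) (rsol ρ rdraft : Fin n → ℝ)
    (hsol : ∀ i, rsol i = 0 ∨ rsol i = 1)
    (hρ : ∀ i, 0 ≤ ρ i ∧ ρ i ≤ 1)
    (hdraft : ∀ i, rdraft i = ρ i * rsol i)
    (hn1 : 1 ≤ (Finset.univ.filter (fun i => rsol i = 1)).card)
    (hn0 : 1 ≤ (Finset.univ.filter (fun i => rsol i = 0)).card)
    (hj : ∃ j, rsol j = 1 ∧ 0 < ρ j) :
    cv rsol ≤ cv rdraft :=
  stmt_3_general rsol ρ rdraft hsol hρ hdraft hj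
end

section
/- Key estimate in the proof of Theorem 3.2, Part 3: Let n ≥ 1 and let r : Fin n → ℝ satisfy r_i ≥ 0 for all i, with mean(r) > 0 and Var(r) > 0. Let M = max_{1 ≤ i ≤ n} r_i. Then the squared standardized advantage of the maximal entry satisfies ((M − mean(r))/std(r))² ≥ M/mean(r) − 1. -/
open Finset

/-!
The entries lie in `[0, M]`, so `∑ (M - rᵢ) rᵢ ≥ 0`; expanding around the mean gives the
Bhatia–Davis bound `Var r ≤ (M - mean r) · mean r`. Hence
`((M - mean r) / std r)² = (M - mean r)² / Var r ≥ (M - mean r) / mean r = M / mean r - 1`.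
-/

section BhatiaDavis

variable {n : ℕ} (r : Fin n → ℝ)

theorem sum_eq_card_mul_mean : ∑ i, r i = n * mean r := by
  rcases Nat.eq_zero_or_pos n with rfl | hn
  · simp [mean]
  · rw [mean, mul_div_cancel₀ _ (by positivity)]

theorem sum_sub_mean : ∑ i, (r i - mean r) = 0 := by
  simp [sum_sub_distrib, sum_eq_card_mul_mean]

theorem sum_sq_sub_mean_le_sub_mul_sub {m M : ℝ} (hlo : ∀ i, m ≤ r i) (hhi : ∀ i, r i ≤ M) :
    ∑ i, (r i - mean r) ^ 2 ≤ n * ((M - mean r) * (mean r - m)) := by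
  have hprod : 0 ≤ ∑ i, (M - r i) * (r i - m) :=
    sum_nonneg fun i _ => mul_nonneg (sub_nonneg.2 (hhi i)) (sub_nonneg.2 (hlo i))
  have hexpand : ∑ i, (M - r i) * (r i - m) =
      n * ((M - mean r) * (mean r - m)) - ∑ i, (r i - mean r) ^ 2 := by
    have hterm : ∀ i, (M - r i) * (r i - m) = (M - mean r) * (mean r - m)
        + (M + m - 2 * mean r) * (r i - mean r) - (r i - mean r) ^ 2 := fun i => by ring
    have hlinear : ∑ i, (M + m - 2 * mean r) * (r i - mean r) = 0 := by
      rw [← mul_sum, sum_sub_mean, mul_zero]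
    rw [sum_congr rfl fun i _ => hterm i, sum_sub_distrib, sum_add_distrib,
      hlinear, sum_const, card_univ, Fintype.card_fin, nsmul_eq_mul, add_zero]
  linarith

theorem pvar_le_sub_mul_sub (hn : 0 < n) {m M : ℝ} (hlo : ∀ i, m ≤ r i) (hhi : ∀ i, r i ≤ M) :
    pvar r ≤ (M - mean r) * (mean r - m) := by
  rw [pvar, div_le_iff₀ (by positivity), mul_comm]
  exact sum_sq_sub_mean_le_sub_mul_sub r hlo hhi

end BhatiaDavis

theorem stmt_8_general {n : ℕ} (hn : 1 ≤ n) (r : Fin n → ℝ)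
    (hr : ∀ i, 0 ≤ r i) (hmean : 0 < mean r) (hvar : 0 < pvar r)
    (M : ℝ) (hub : ∀ i, r i ≤ M) :
    ((M - mean r) / pstd r) ^ 2 ≥ M / mean r - 1 := by
  have hbound : pvar r ≤ (M - mean r) * mean r := by
    simpa using pvar_le_sub_mul_sub r hn hr hub
  have hgap : 0 < M - mean r := pos_of_mul_pos_left (hvar.trans_le hbound) hmean.le
  rw [div_pow, pstd, Real.sq_sqrt hvar.le, ge_iff_le]
  calc M / mean r - 1 = (M - mean r) ^ 2 / ((M - mean r) * mean r) := by
        field_simp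
    _ ≤ (M - mean r) ^ 2 / pvar r := div_le_div_of_nonneg_left (sq_nonneg _) hvar hbound

/-- Key estimate in the proof of Theorem 3.2, Part 3: with `M = max_i r i`,
`((M − mean r)/std r)² ≥ M/mean r − 1`. -/
theorem stmt_8 {n : ℕ} (hn : 1 ≤ n) (r : Fin n → ℝ)
    (hr : ∀ i, 0 ≤ r i) (hmean : 0 < mean r) (hvar : 0 < pvar r)
    (M : ℝ) (hub : ∀ i, r i ≤ M) (hmem : ∃ i, r i = M) :
    ((M - mean r) / pstd r) ^ 2 ≥ M / mean r - 1 :=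
  stmt_8_general hn r hr hmean hvar M hub
end

section
/- Per-token surrogate bound under negative sample masking (Appendix B.1, inequality J_DFPO-off ≤ J_surrogate): Let ρ > 0 be a real number, let 0 < ε < 1, and let A_d, A_s be real numbers satisfying the negative-sample-masking condition: if A_s ≤ 0 then A_d = A_s. Then min(ρ·A_d, clip(ρ, 1−ε, 1+ε)·A_d) ≤ min(ρ·A_s, clip(ρ, 1−ε, 1+ε)·A_s) + min(ρ, clip(ρ, 1−ε, 1+ε))·max(A_d − A_s, 0). -/
/-- `clip x a b = max a (min x b)`, the PPO-style clipping operation. -/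
noncomputable def clip (x a b : ℝ) : ℝ := max a (min x b)

/-! If `y > 0`, the clipped objective is exactly `min a b * y`, while at `x` it is at most
`min a b * x` whatever the sign of `x`; since `min a b ≥ 0`, the excess `x - y` costs at most
`min a b * max (x - y) 0`. If `y ≤ 0`, masking makes both sides agree. -/

lemma clip_nonneg {x a b : ℝ} (ha : 0 ≤ a) : 0 ≤ clip x a b :=
  le_max_of_le_left ha

lemma min_mul_le_min_mul (a b x : ℝ) : min (a * x) (b * x) ≤ min a b * x := by
  rcases min_choice a b with h | h <;> rw [h]
  exacts [min_le_left _ _, min_le_right _ _]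

lemma min_mul_le_min_mul_add_min_mul_posPart {a b x y : ℝ} (ha : 0 ≤ a) (hb : 0 ≤ b)
    (hmask : y ≤ 0 → x = y) :
    min (a * x) (b * x) ≤ min (a * y) (b * y) + min a b * max (x - y) 0 := by
  by_cases hy : y ≤ 0
  · simp [hmask hy]
  have hmin_y : min (a * y) (b * y) = min a b * y :=
    (min_mul_of_nonneg a b (not_le.mp hy).le).symm
  calc min (a * x) (b * x) ≤ min a b * x := min_mul_le_min_mul a b x
    _ ≤ min a b * (y + max (x - y) 0) :=
      mul_le_mul_of_nonneg_left (by linarith [le_max_left (x - y) 0]) (le_min ha hb)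
    _ = min (a * y) (b * y) + min a b * max (x - y) 0 := by rw [hmin_y]; ring

theorem stmt_12_general (ρ ε Ad As : ℝ) (hρ : 0 < ρ) (hε1 : ε < 1)
    (hmask : As ≤ 0 → Ad = As) :
    min (ρ * Ad) (clip ρ (1 - ε) (1 + ε) * Ad) ≤
      min (ρ * As) (clip ρ (1 - ε) (1 + ε) * As) +
        min ρ (clip ρ (1 - ε) (1 + ε)) * max (Ad - As) 0 :=
  min_mul_le_min_mul_add_min_mul_posPart hρ.le (clip_nonneg (by linarith)) hmask

/-- Per-token surrogate bound under negative sample masking (Appendix B.1):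
if `A_s ≤ 0 → A_d = A_s`, then
`min(ρ·A_d, clip(ρ,1−ε,1+ε)·A_d) ≤
  min(ρ·A_s, clip(ρ,1−ε,1+ε)·A_s) + min(ρ, clip(ρ,1−ε,1+ε))·max(A_d − A_s, 0)`. -/
theorem stmt_12 (ρ ε Ad As : ℝ) (hρ : 0 < ρ) (hε0 : 0 < ε) (hε1 : ε < 1)
    (hmask : As ≤ 0 → Ad = As) :
    min (ρ * Ad) (clip ρ (1 - ε) (1 + ε) * Ad) ≤
      min (ρ * As) (clip ρ (1 - ε) (1 + ε) * As) +
        min ρ (clip ρ (1 - ε) (1 + ε)) * max (Ad - As) 0 :=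
  stmt_12_general ρ ε Ad As hρ hε1 hmask
end
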